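/- In the setting of the one-dimensional optimal stopping problem v_⋆(x) := inf_τ E[ ∫_0^τ e^{−ρt} Ψ^x_t h'(Ψ^x_t) dt + 1_{{τ < ∞}} e^{−ρτ} Ψ^x_τ ], assume additionally ρ > max(β₂ + σ²/2, γβ₂ + (σ²/2)γ(γ − 1)). If x > 0 satisfies h'(x) < ρ − β₂, then v_⋆(x) < x; consequently every point of the stopping set { x > 0 : v_⋆(x) ≥ x } satisfies h'(x) ≥ ρ − β₂. -/

import Mathlib

/-!
Stopping at a small deterministic time `T` beats stopping at once. Its cost is
`E ∫₀ᵀ e^{-ρt} Ψ_t h'(Ψ_t) dt + x e^{-(ρ-β₂)T}`, the second term by the Gaussian moment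
generating function. Since `W_t` has the law of `√t Z` with `Z` standard normal, the expected
running rate is continuous at `t = 0` by dominated convergence (the growth bound on `h'` gives an
`exp (k |Z|)` majorant), with value `x h'(x)`. So on some `[0, T)` it stays below a constant
`c < x (ρ - β₂)`, and the cost is at most `c T + x e^{-(ρ-β₂)T}`, which has derivative
`c - x (ρ - β₂) < 0` at `T = 0` and hence is `< x` for small `T > 0`.
-/

open MeasureTheory ProbabilityTheory ENNReal

/-- `W` is a standard one-dimensional Brownian motion on `(Ω, F, P)`. -/
def IsStandardBM {Ω : Type*} [MeasurableSpace Ω] (μ : Measure Ω) (W : ℝ → Ω → ℝ) : Prop :=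
  (∀ t : ℝ, Measurable (W t)) ∧
  (∀ᵐ ω ∂μ, W 0 ω = 0) ∧
  (∀ᵐ ω ∂μ, Continuous fun t => W t ω) ∧
  (∀ (n : ℕ) (t : ℕ → ℝ), Monotone t → (∀ i, 0 ≤ t i) →
    iIndepFun
      (fun (i : Fin n) ω => W (t (i + 1)) ω - W (t i) ω) μ) ∧
  (∀ s t : ℝ, 0 ≤ s → s ≤ t →
    μ.map (fun ω => W t ω - W s ω) = gaussianReal 0 (Real.toNNReal (t - s)))

/-- The geometric Brownian motion `Ψ^x_t = x exp((β₂ − σ²/2)t + σ W_t)`. -/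
noncomputable def gbm {Ω : Type*} (W : ℝ → Ω → ℝ) (β₂ σ x : ℝ) (t : ℝ) (ω : Ω) : ℝ :=
  x * Real.exp ((β₂ - σ ^ 2 / 2) * t + σ * W t ω)

/-- The natural filtration generated by the process `W`: `σ(W_s : 0 ≤ s ≤ t)`. -/
def natFilt {Ω : Type*} (W : ℝ → Ω → ℝ) (t : ℝ) : MeasurableSpace Ω :=
  ⨆ s ∈ Set.Icc (0:ℝ) t, MeasurableSpace.comap (W s) (inferInstance : MeasurableSpace ℝ)

/-- `τ : Ω → [0,∞]` is a stopping time of the natural filtration of `W`. -/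
def IsNatStoppingTime {Ω : Type*} (W : ℝ → Ω → ℝ) (τ : Ω → ℝ≥0∞) : Prop :=
  ∀ t : ℝ, 0 ≤ t → MeasurableSet[natFilt W t] {ω | τ ω ≤ ENNReal.ofReal t}

/-- The cost `E[∫_0^τ e^{−ρt} X_t h'(X_t) dt + 1_{τ<∞} e^{−ρτ} X_τ]` associated with the
stopping time `τ` (the terminal payoff being `0` on `{τ = ∞}`). -/
noncomputable def stopCost {Ω : Type*} [MeasurableSpace Ω] (μ : Measure Ω) (ρ : ℝ)
    (h' : ℝ → ℝ) (X : ℝ → Ω → ℝ) (τ : Ω → ℝ≥0∞) : ℝ≥0∞ :=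
  ∫⁻ ω,
    (∫⁻ t in {t : ℝ | 0 ≤ t ∧ ENNReal.ofReal t < τ ω},
        ENNReal.ofReal (Real.exp (-ρ * t) * X t ω * h' (X t ω)))
      + (if τ ω < ⊤ then
          ENNReal.ofReal (Real.exp (-ρ * (τ ω).toReal) * X (τ ω).toReal ω) else 0) ∂μ

/-- The value `v(x) = inf_τ stopCost` of the optimal stopping problem, the infimum being
over all stopping times of the natural filtration of `W`. -/
noncomputable def stopValue {Ω : Type*} [MeasurableSpace Ω] (μ : Measure Ω) (ρ : ℝ)
    (h' : ℝ → ℝ) (W : ℝ → Ω → ℝ) (X : ℝ → Ω → ℝ) : ℝ≥0∞ :=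
  ⨅ τ : {τ : Ω → ℝ≥0∞ // IsNatStoppingTime W τ}, stopCost μ ρ h' X τ.1

open Filter Topology Real

lemma integrable_exp_mul_abs_gaussianReal (m : ℝ) (v : NNReal) (k : ℝ) :
    Integrable (fun z => exp (k * |z|)) (gaussianReal m v) :=
  integrable_exp_mul_abs (X := id) (integrable_exp_mul_gaussianReal k)
    (integrable_exp_mul_gaussianReal (-k))

lemma continuousAt_lintegral_ofReal_of_le {ν : Measure ℝ} {F : ℝ → ℝ → ℝ} {g : ℝ → ℝ}
    {t₀ : ℝ} (hF : Continuous (Function.uncurry F)) (hg : Integrable g ν)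
    (hle : ∀ᶠ t in 𝓝 t₀, ∀ z, F t z ≤ g z) :
    ContinuousAt (fun t => ∫⁻ z, ENNReal.ofReal (F t z) ∂ν) t₀ := by
  refine tendsto_lintegral_filter_of_dominated_convergence (fun z => ENNReal.ofReal (g z))
    (.of_forall fun t => (hF.comp (Continuous.prodMk_right t)).measurable.ennreal_ofReal) ?_
    hg.lintegral_lt_top.ne (.of_forall fun z => ?_)
  · filter_upwards [hle] with t ht
    exact .of_forall fun z => ENNReal.ofReal_le_ofReal (ht z)
  · exact (ENNReal.continuous_ofReal.comp (hF.comp (Continuous.prodMk_left z))).continuousAt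

section BrownianMotion

variable {Ω : Type*} [MeasurableSpace Ω] {μ : Measure Ω} {W : ℝ → Ω → ℝ} {t : ℝ}

lemma IsStandardBM.map_eq (hW : IsStandardBM μ W) (ht : 0 ≤ t) :
    μ.map (W t) = gaussianReal 0 t.toNNReal := by
  obtain ⟨-, hW0, -, -, hlaw⟩ := hW
  calc μ.map (W t) = μ.map (fun ω => W t ω - W 0 ω) :=
        Measure.map_congr (by filter_upwards [hW0] with ω h0 using by simp [h0])
    _ = gaussianReal 0 t.toNNReal := by rw [hlaw 0 t le_rfl ht, sub_zero]

lemma IsStandardBM.lintegral_comp (hW : IsStandardBM μ W) (ht : 0 ≤ t) {Φ : ℝ → ℝ≥0∞}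
    (hΦ : Measurable Φ) :
    ∫⁻ ω, Φ (W t ω) ∂μ = ∫⁻ z, Φ (√t * z) ∂gaussianReal 0 1 := by
  have hlaw : gaussianReal 0 t.toNNReal = (gaussianReal 0 1).map (√t * ·) := by
    rw [gaussianReal_map_const_mul, mul_zero, mul_one]
    congr
    ext
    simp [Real.sq_sqrt ht, ht]
  rw [← lintegral_map hΦ (hW.1 t), hW.map_eq ht, hlaw,
    lintegral_map hΦ (measurable_const_mul _)]

lemma IsStandardBM.lintegral_exp_mul (hW : IsStandardBM μ W) (ht : 0 ≤ t) (c : ℝ) :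
    ∫⁻ ω, ENNReal.ofReal (exp (c * W t ω)) ∂μ = ENNReal.ofReal (exp (c ^ 2 * t / 2)) := by
  have hΦ : Measurable fun y => ENNReal.ofReal (exp (c * y)) := by fun_prop
  rw [← lintegral_map hΦ (hW.1 t), hW.map_eq ht,
    ← ofReal_integral_eq_lintegral_ofReal (integrable_exp_mul_gaussianReal c)
      (.of_forall fun _ => (exp_pos _).le)]
  have hmgf := congrFun (mgf_id_gaussianReal (μ := 0) (v := t.toNNReal)) c
  rw [mgf] at hmgf
  simp only [id] at hmgf
  rw [hmgf, Real.coe_toNNReal _ ht]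
  ring_nf

lemma IsStandardBM.eventually_lintegral_lt [IsProbabilityMeasure μ] (hW : IsStandardBM μ W)
    {Φ : ℝ → ℝ → ℝ} (hΦ : Continuous (Function.uncurry Φ)) {g : ℝ → ℝ}
    (hg : Integrable g (gaussianReal 0 1)) (hle : ∀ᶠ t in 𝓝 0, ∀ z, Φ t (√t * z) ≤ g z)
    {c : ℝ≥0∞} (hc : ENNReal.ofReal (Φ 0 0) < c) :
    ∀ᶠ t in 𝓝[≥] 0, ∫⁻ ω, ENNReal.ofReal (Φ t (W t ω)) ∂μ < c := by
  have hcont := continuousAt_lintegral_ofReal_of_le (F := fun t z => Φ t (√t * z))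
    (hΦ.comp (f := fun p : ℝ × ℝ => (p.1, √p.1 * p.2)) (by fun_prop)) hg hle
  rw [ContinuousAt, sqrt_zero] at hcont
  simp only [zero_mul, lintegral_const, measure_univ, mul_one] at hcont
  filter_upwards [nhdsWithin_le_nhds (hcont.eventually_lt_const hc), self_mem_nhdsWithin]
    with t ht (ht0 : 0 ≤ t)
  rwa [hW.lintegral_comp (Φ := fun w => ENNReal.ofReal (Φ t w)) ht0
    (hΦ.comp (Continuous.prodMk_right t)).measurable.ennreal_ofReal]

end BrownianMotion

lemma lintegral_lintegral_swap_of_ae_continuous {Ω : Type*} [MeasurableSpace Ω]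
    {μ : Measure Ω} [SFinite μ] {ν : Measure ℝ} [SFinite ν] {W : ℝ → Ω → ℝ}
    (hmeas : ∀ t, Measurable (W t)) (hcont : ∀ᵐ ω ∂μ, Continuous fun t => W t ω)
    {Φ : ℝ → ℝ → ℝ≥0∞} (hΦ : Measurable (Function.uncurry Φ)) :
    ∫⁻ ω, ∫⁻ t, Φ t (W t ω) ∂ν ∂μ = ∫⁻ t, ∫⁻ ω, Φ t (W t ω) ∂μ ∂ν := by
  -- setting `W` to `0` on a null set makes all paths continuous, hence `W` jointly measurable
  obtain ⟨N, hNsub, hNmeas, hN0⟩ := exists_measurable_superset_of_null (ae_iff.mp hcont)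
  set W' : ℝ → Ω → ℝ := fun t => Nᶜ.indicator (W t)
  have hW'cont : ∀ ω, Continuous fun t => W' t ω := by
    intro ω
    by_cases hω : ω ∈ N
    · simpa [W', hω] using continuous_const
    · simpa [W', hω] using not_not.mp fun h => hω (hNsub h)
  have hW' : Measurable fun p : Ω × ℝ => W' p.2 p.1 :=
    (measurable_uncurry_of_continuous_of_measurable hW'cont
      fun t => (hmeas t).indicator hNmeas.compl).comp measurable_swap
  have hae : ∀ᵐ p ∂μ.prod ν, W p.2 p.1 = W' p.2 p.1 :=
    Measure.quasiMeasurePreserving_fst.ae (p := fun ω => ∀ t, W t ω = W' t ω)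
      (measure_mono_null (fun ω hω => by_contra fun hN => hω fun t => by simp [W', hN]) hN0)
      |>.mono fun p hp => hp p.2
  exact lintegral_lintegral_swap
    (hΦ.comp_aemeasurable (measurable_snd.aemeasurable.prodMk ⟨_, hW', hae⟩))

lemma lintegral_setLIntegral_Ico_le {Ω : Type*} [MeasurableSpace Ω] {μ : Measure Ω} [SFinite μ]
    {W : ℝ → Ω → ℝ} (hmeas : ∀ t, Measurable (W t)) (hcont : ∀ᵐ ω ∂μ, Continuous fun t => W t ω)
    {Φ : ℝ → ℝ → ℝ≥0∞} (hΦ : Measurable (Function.uncurry Φ)) {T : ℝ} {c : ℝ≥0∞}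
    (hle : ∀ t ∈ Set.Ico 0 T, ∫⁻ ω, Φ t (W t ω) ∂μ ≤ c) :
    ∫⁻ ω, (∫⁻ t in Set.Ico 0 T, Φ t (W t ω)) ∂μ ≤ c * ENNReal.ofReal T := by
  rw [lintegral_lintegral_swap_of_ae_continuous hmeas hcont hΦ]
  calc ∫⁻ t in Set.Ico 0 T, ∫⁻ ω, Φ t (W t ω) ∂μ ≤ ∫⁻ _ in Set.Ico 0 T, c :=
        setLIntegral_mono measurable_const hle
    _ = c * ENNReal.ofReal T := by rw [setLIntegral_const, Real.volume_Ico, sub_zero]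

lemma isNatStoppingTime_const {Ω : Type*} (W : ℝ → Ω → ℝ) (c : ℝ≥0∞) :
    IsNatStoppingTime W fun _ => c :=
  fun _ _ => MeasurableSet.const _

section Stopping

variable {Ω : Type*} [MeasurableSpace Ω] {μ : Measure Ω} {ρ : ℝ} {h' : ℝ → ℝ}
  {W X : ℝ → Ω → ℝ}

lemma stopValue_le_stopCost {τ : Ω → ℝ≥0∞} (hτ : IsNatStoppingTime W τ) :
    stopValue μ ρ h' W X ≤ stopCost μ ρ h' X τ :=
  iInf_le (fun τ : {τ // IsNatStoppingTime W τ} => stopCost μ ρ h' X τ.1) ⟨τ, hτ⟩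

lemma stopCost_const {T : ℝ} (hT : 0 ≤ T) (hX : Measurable (X T)) :
    stopCost μ ρ h' X (fun _ => ENNReal.ofReal T) =
      ∫⁻ ω, (∫⁻ t in Set.Ico 0 T, ENNReal.ofReal (exp (-ρ * t) * X t ω * h' (X t ω))) ∂μ +
        ∫⁻ ω, ENNReal.ofReal (exp (-ρ * T) * X T ω) ∂μ := by
  have hIco : {t : ℝ | 0 ≤ t ∧ ENNReal.ofReal t < ENNReal.ofReal T} = Set.Ico 0 T := by
    ext t
    simp +contextual [ENNReal.ofReal_lt_ofReal_iff_of_nonneg]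
  simp only [stopCost, hIco, ofReal_lt_top, if_true, toReal_ofReal hT]
  exact lintegral_add_right _ (measurable_const.mul hX).ennreal_ofReal

end Stopping

lemma eventually_mul_add_mul_exp_neg_lt {a c x : ℝ} (h : c < x * a) :
    ∀ᶠ T in 𝓝[>] 0, c * T + x * exp (-(a * T)) < x := by
  have hderiv : HasDerivWithinAt (fun T => c * T + x * exp (-(a * T))) (c - x * a)
      (Set.Ioi 0) 0 := by
    refine HasDerivAt.hasDerivWithinAt ?_
    convert ((hasDerivAt_id' (0 : ℝ)).const_mul c).fun_add
      ((((hasDerivAt_id' (0 : ℝ)).const_mul a).fun_neg.exp).const_mul x) using 1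
    simp [sub_eq_add_neg]
  filter_upwards [hderiv.limsup_slope_le' (lt_irrefl (0 : ℝ)) (sub_neg.2 h), self_mem_nhdsWithin]
    with T hslope (hT : 0 < T)
  simpa [slope_def_field, div_neg_iff, hT, not_lt_of_gt hT] using hslope

section GeometricBM

variable {β₂ σ x : ℝ}

/-- The running cost `e^{-ρt} Ψ h'(Ψ)` at time `t` on the event `W_t = w`. -/
noncomputable def gbmRunningCost (ρ β₂ σ x : ℝ) (h' : ℝ → ℝ) (t w : ℝ) : ℝ :=
  exp (-ρ * t) * (x * exp ((β₂ - σ ^ 2 / 2) * t + σ * w)) *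
    h' (x * exp ((β₂ - σ ^ 2 / 2) * t + σ * w))

lemma continuous_gbmRunningCost {ρ : ℝ} {h' : ℝ → ℝ} (hh' : Continuous h') :
    Continuous (Function.uncurry (gbmRunningCost ρ β₂ σ x h')) := by
  unfold gbmRunningCost
  fun_prop

lemma mul_le_mul_add_rpow_of_abs_le {u y K γ : ℝ} (hu : 0 < u)
    (hy : |y| ≤ K * (1 + u ^ (γ - 1))) : u * y ≤ K * (u + u ^ γ) :=
  calc u * y ≤ u * (K * (1 + u ^ (γ - 1))) :=
        mul_le_mul_of_nonneg_left ((le_abs_self y).trans hy) hu.le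
    _ = K * (u + u ^ γ) := by
        rw [rpow_sub_one hu.ne']
        field_simp

lemma gbmRunningCost_sqrt_mul_le {ρ γ K : ℝ} {h' : ℝ → ℝ} (hx : 0 < x) (hγ : 0 ≤ γ) (hK : 0 ≤ K)
    (hh' : ∀ u, 0 ≤ u → |h' u| ≤ K * (1 + u ^ (γ - 1))) {t : ℝ} (ht : |t| ≤ 1) (z : ℝ) :
    gbmRunningCost ρ β₂ σ x h' t (√t * z) ≤
      exp |ρ| * K * (x * exp |β₂ - σ ^ 2 / 2| * exp (|σ| * |z|) +
        (x * exp |β₂ - σ ^ 2 / 2|) ^ γ * exp (γ * |σ| * |z|)) := by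
  set b := β₂ - σ ^ 2 / 2
  set u := x * exp (b * t + σ * (√t * z)) with hu_def
  set v := x * exp |b| * exp (|σ| * |z|) with hv_def
  have habs (r : ℝ) : |r * t| ≤ |r| := by
    rw [abs_mul]
    exact mul_le_of_le_one_right (abs_nonneg r) ht
  have hexp : b * t + σ * (√t * z) ≤ |b| + |σ| * |z| := by
    have hsqrt : √t ≤ 1 := sqrt_le_one.2 (le_abs_self t |>.trans ht)
    have hσz : |σ * (√t * z)| ≤ |σ| * |z| := by
      rw [abs_mul, abs_mul, abs_of_nonneg (sqrt_nonneg t)]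
      gcongr
      exact mul_le_of_le_one_left (abs_nonneg z) hsqrt
    linarith [le_abs_self (b * t), le_abs_self (σ * (√t * z)), habs b]
  have hu : 0 < u := by positivity
  have huv : u ≤ v :=
    calc u ≤ x * exp (|b| + |σ| * |z|) := by rw [hu_def]; gcongr
      _ = v := by rw [hv_def, exp_add, mul_assoc]
  calc gbmRunningCost ρ β₂ σ x h' t (√t * z) = exp (-ρ * t) * (u * h' u) := mul_assoc _ _ _
    _ ≤ exp (-ρ * t) * (K * (u + u ^ γ)) :=
        mul_le_mul_of_nonneg_left (mul_le_mul_add_rpow_of_abs_le hu (hh' u hu.le)) (exp_pos _).le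
    _ ≤ exp |ρ| * (K * (v + v ^ γ)) := by
        gcongr
        rw [neg_mul]
        exact (neg_le_abs _).trans (habs ρ)
    _ = _ := by
        rw [mul_rpow (by positivity) (exp_pos _).le, ← exp_mul]
        ring_nf

lemma IsStandardBM.eventually_lintegral_gbmRunningCost_lt {Ω : Type*} [MeasurableSpace Ω]
    {μ : Measure Ω} [IsProbabilityMeasure μ] {W : ℝ → Ω → ℝ} (hW : IsStandardBM μ W)
    {ρ γ K c : ℝ} {h' : ℝ → ℝ} (hx : 0 < x) (hγ : 0 ≤ γ) (hK : 0 ≤ K) (hh'_cont : Continuous h')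
    (hh' : ∀ u, 0 ≤ u → |h' u| ≤ K * (1 + u ^ (γ - 1))) (hc : x * h' x < c) (hc0 : 0 < c) :
    ∀ᶠ t in 𝓝[≥] 0,
      ∫⁻ ω, ENNReal.ofReal (gbmRunningCost ρ β₂ σ x h' t (W t ω)) ∂μ < ENNReal.ofReal c := by
  have hg := ((integrable_exp_mul_abs_gaussianReal 0 1 |σ|).const_mul (x * exp |β₂ - σ ^ 2 / 2|)
    |>.add ((integrable_exp_mul_abs_gaussianReal 0 1 (γ * |σ|)).const_mul
      ((x * exp |β₂ - σ ^ 2 / 2|) ^ γ))).const_mul (exp |ρ| * K)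
  refine hW.eventually_lintegral_lt (continuous_gbmRunningCost hh'_cont) hg ?_ ?_
  · filter_upwards [Icc_mem_nhds neg_one_lt_zero one_pos] with t ht
    exact gbmRunningCost_sqrt_mul_le hx hγ hK hh' (abs_le.2 ht)
  · simpa [gbmRunningCost] using (ENNReal.ofReal_lt_ofReal_iff hc0).2 hc

lemma IsStandardBM.lintegral_exp_mul_gbm {Ω : Type*} [MeasurableSpace Ω] {μ : Measure Ω}
    {W : ℝ → Ω → ℝ} (hW : IsStandardBM μ W) (hx : 0 ≤ x) (ρ : ℝ) {T : ℝ} (hT : 0 ≤ T) :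
    ∫⁻ ω, ENNReal.ofReal (exp (-ρ * T) * gbm W β₂ σ x T ω) ∂μ =
      ENNReal.ofReal (x * exp (-((ρ - β₂) * T))) := by
  have hsplit : ∀ ω, exp (-ρ * T) * gbm W β₂ σ x T ω =
      x * exp ((β₂ - σ ^ 2 / 2 - ρ) * T) * exp (σ * W T ω) := fun ω => by
    rw [gbm, mul_left_comm, mul_assoc, ← exp_add, ← exp_add]
    ring_nf
  simp_rw [hsplit, ENNReal.ofReal_mul (by positivity : 0 ≤ x * exp ((β₂ - σ ^ 2 / 2 - ρ) * T))]
  rw [lintegral_const_mul _ ((hW.1 T).const_mul σ).exp.ennreal_ofReal, hW.lintegral_exp_mul hT,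
    ← ENNReal.ofReal_mul (by positivity), mul_assoc, ← exp_add]
  ring_nf

end GeometricBM

lemma IsStandardBM.stopValue_gbm_lt {Ω : Type*} [MeasurableSpace Ω] {μ : Measure Ω}
    [IsProbabilityMeasure μ] {W : ℝ → Ω → ℝ} (hW : IsStandardBM μ W) {β₂ σ γ K ρ x : ℝ}
    {h' : ℝ → ℝ} (hγ : 0 ≤ γ) (hK : 0 ≤ K) (hh'_cont : Continuous h')
    (hh' : ∀ u, 0 ≤ u → |h' u| ≤ K * (1 + u ^ (γ - 1))) (ha : 0 < ρ - β₂) (hx : 0 < x)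
    (hlt : h' x < ρ - β₂) :
    stopValue μ ρ h' W (gbm W β₂ σ x) < ENNReal.ofReal x := by
  obtain ⟨c, hc, hca⟩ := exists_between (max_lt (mul_lt_mul_of_pos_left hlt hx) (mul_pos hx ha))
  have hc0 : 0 < c := (le_max_right _ _).trans_lt hc
  obtain ⟨ε, hε, hrate⟩ := mem_nhdsGE_iff_exists_Ico_subset.1
    (hW.eventually_lintegral_gbmRunningCost_lt (β₂ := β₂) (σ := σ) (ρ := ρ) hx hγ hK
      hh'_cont hh' ((le_max_left _ _).trans_lt hc) hc0)
  obtain ⟨T, hT, hT0, hTε⟩ :=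
    ((eventually_mul_add_mul_exp_neg_lt hca).and (Ioo_mem_nhdsGT hε)).exists
  have hmeas : Measurable (gbm W β₂ σ x T) := by
    have := hW.1 T
    unfold gbm
    fun_prop
  calc stopValue μ ρ h' W (gbm W β₂ σ x)
      ≤ stopCost μ ρ h' (gbm W β₂ σ x) fun _ => ENNReal.ofReal T :=
        stopValue_le_stopCost (isNatStoppingTime_const W _)
    _ = _ := stopCost_const hT0.le hmeas
    _ ≤ ENNReal.ofReal c * ENNReal.ofReal T + ENNReal.ofReal (x * exp (-((ρ - β₂) * T))) :=
        add_le_add (lintegral_setLIntegral_Ico_le hW.1 hW.2.2.1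
          (Φ := fun t w => ENNReal.ofReal (gbmRunningCost ρ β₂ σ x h' t w))
          (continuous_gbmRunningCost hh'_cont).measurable.ennreal_ofReal
          fun t ht => (hrate ⟨ht.1, ht.2.trans hTε⟩).le)
          (hW.lintegral_exp_mul_gbm hx.le ρ hT0.le).le
    _ < ENNReal.ofReal x := by
        rw [← ENNReal.ofReal_mul hc0.le, ← ENNReal.ofReal_add (by positivity) (by positivity),
          ENNReal.ofReal_lt_ofReal_iff hx]
        exact hT

theorem stopValue_lt_of_deriv_lt_general
    {Ω : Type*} [MeasurableSpace Ω] (μ : Measure Ω) [IsProbabilityMeasure μ]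
    (W : ℝ → Ω → ℝ) (hW : IsStandardBM μ W)
    (β₂ σ : ℝ)
    (γ K₁ : ℝ) (hγ : 1 < γ) (hK₁ : 0 < K₁)
    (h' : ℝ → ℝ)
    (hh'_cont : Continuous h')
    (hh'_bound : ∀ u : ℝ, 0 ≤ u → |h' u| ≤ K₁ * (1 + u ^ (γ - 1)))
    (ρ : ℝ) (hρ : max (β₂ + σ ^ 2 / 2) (γ * β₂ + σ ^ 2 / 2 * γ * (γ - 1)) < ρ) :
    (∀ x : ℝ, 0 < x → h' x < ρ - β₂ →
        stopValue μ ρ h' W (gbm W β₂ σ x) < ENNReal.ofReal x) ∧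
      ∀ x : ℝ, 0 < x → ENNReal.ofReal x ≤ stopValue μ ρ h' W (gbm W β₂ σ x) →
        ρ - β₂ ≤ h' x := by
  have key (x : ℝ) (hx : 0 < x) (hlt : h' x < ρ - β₂) :
      stopValue μ ρ h' W (gbm W β₂ σ x) < ENNReal.ofReal x :=
    hW.stopValue_gbm_lt (by linarith) hK₁.le hh'_cont hh'_bound
      (by linarith [(le_max_left _ _).trans_lt hρ, sq_nonneg σ]) hx hlt
  exact ⟨key, fun x hx hle => not_lt.1 fun hlt => hle.not_gt (key x hx hlt)⟩

/-- If `h'(x) < ρ − β₂` then `v_⋆(x) < x`; consequently every point of the stopping set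
`{ x > 0 : v_⋆(x) ≥ x }` satisfies `h'(x) ≥ ρ − β₂`. -/
theorem stopValue_lt_of_deriv_lt
    {Ω : Type*} [MeasurableSpace Ω] (μ : Measure Ω) [IsProbabilityMeasure μ]
    (W : ℝ → Ω → ℝ) (hW : IsStandardBM μ W)
    (β₂ σ : ℝ) (hσ : 0 < σ)
    (γ K₁ : ℝ) (hγ : 1 < γ) (hK₁ : 0 < K₁)
    (h h' : ℝ → ℝ)
    (hconv : ConvexOn ℝ Set.univ h)
    (hderiv : ∀ u : ℝ, HasDerivAt h (h' u) u)
    (hh'_cont : Continuous h')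
    (hmono : MonotoneOn h (Set.Ici (0:ℝ)))
    (h0 : h 0 = 0)
    (hh'_bound : ∀ u : ℝ, 0 ≤ u → |h' u| ≤ K₁ * (1 + u ^ (γ - 1)))
    (ρ : ℝ) (hρ : max (β₂ + σ ^ 2 / 2) (γ * β₂ + σ ^ 2 / 2 * γ * (γ - 1)) < ρ) :
    (∀ x : ℝ, 0 < x → h' x < ρ - β₂ →
        stopValue μ ρ h' W (gbm W β₂ σ x) < ENNReal.ofReal x) ∧
      ∀ x : ℝ, 0 < x → ENNReal.ofReal x ≤ stopValue μ ρ h' W (gbm W β₂ σ x) →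
        ρ - β₂ ≤ h' x :=
  stopValue_lt_of_deriv_lt_general μ W hW β₂ σ γ K₁ hγ hK₁ h' hh'_cont hh'_bound ρ hρ
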